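/- arXiv:1806.02469 — 3 statements merged into one kernel-verified Lean document; each statement's English description precedes it below -/
import Mathlib

section
/- Let d ≥ 3. For every a ∈ (0, 1) and every c > 0 there exists a constant K > 0 such that for all x ∈ ℝ^d with |x| ≥ 1, μ( 𝓛({0}) ∩ 𝓛(x + B_{c·|x|^a}) ) ≤ K·|x|^{(a−1)(d−1)}, where x + B_s denotes the closed Euclidean ball of radius s centred at x. -/
open MeasureTheory Set
open scoped RealInnerProductSpace ENNReal NNReal

noncomputable section

/-- Euclidean space `ℝ^d`. -/
abbrev Euc (d : ℕ) := EuclideanSpace ℝ (Fin d)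

/-- The parameter space of lines: pairs `(v, y)` with `‖v‖ = 1` and `⟨v, y⟩ = 0`;
the pair corresponds to the line `{y + t • v : t ∈ ℝ}`. -/
def LineParam (d : ℕ) : Set (Euc d × Euc d) :=
  {p | ‖p.1‖ = 1 ∧ ⟪p.1, p.2⟫ = 0}

/-- The line corresponding to a parameter `(v, y)`: `{y + t • v : t ∈ ℝ}`. -/
def lineOf {d : ℕ} (p : Euc d × Euc d) : Set (Euc d) :=
  {z | ∃ t : ℝ, z = p.2 + t • p.1}

/-- The cylinder of radius 1 around the line with parameter `p`. -/
def cylOf {d : ℕ} (p : Euc d × Euc d) : Set (Euc d) :=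
  {z | ∃ w ∈ lineOf p, dist z w ≤ 1}

/-- `𝓛(A)`: parameters of lines whose cylinder meets `A`. -/
def linesMeeting {d : ℕ} (A : Set (Euc d)) : Set (Euc d × Euc d) :=
  {p ∈ LineParam d | (cylOf p ∩ A).Nonempty}

/-- The Haar measure `μ` on the space of lines:
`μ(A) = ∫_{S^{d-1}} H^{d-1} {y ∈ v^⊥ : (v, y) ∈ A} dσ(v)`, where both the surface
measure `σ` on the unit sphere and `H^{d-1}` are realized by the `(d-1)`-dimensional
Hausdorff measure. -/
def lineMeasure (d : ℕ) (A : Set (Euc d × Euc d)) : ℝ≥0∞ :=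
  ∫⁻ v in Metric.sphere (0 : Euc d) 1,
    μH[((d : ℝ) - 1)] {y : Euc d | ⟪v, y⟫ = 0 ∧ (v, y) ∈ A} ∂(μH[((d : ℝ) - 1)])

/-- The union of the cylinders with parameters in `S`. -/
def cylSet {d : ℕ} (S : Set (Euc d × Euc d)) : Set (Euc d) :=
  ⋃ p ∈ S, cylOf p

/-- The internal distance `ρ_C(x, y)`: infimum of total lengths of polygonal paths
from `x` to `y` all of whose segments lie in `C` (`∞` if there is no such path). -/
def internalDist {d : ℕ} (C : Set (Euc d)) (x y : Euc d) : ℝ≥0∞ :=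
  ⨅ (n : ℕ) (z : Fin (n + 2) → Euc d) (_ : z 0 = x) (_ : z (Fin.last (n + 1)) = y)
    (_ : ∀ k : Fin (n + 1), segment ℝ (z k.castSucc) (z k.succ) ⊆ C),
    ∑ k : Fin (n + 1), ENNReal.ofReal (dist (z k.castSucc) (z k.succ))

/-- `S : Ω → Set (lines)` is the support of a Poisson line process of intensity `u`:
for each Borel `A` of finite `μ`-measure the number of points of `S` in `A` is Poisson
with mean `u·μ(A)`, and the counts of pairwise disjoint Borel sets are independent. -/
structure IsPoissonLineProcess (d : ℕ) (u : ℝ) {Ω : Type*} [MeasurableSpace Ω]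
    (ℙ : Measure Ω) (S : Ω → Set (Euc d × Euc d)) : Prop where
  mem_param : ∀ ω, S ω ⊆ LineParam d
  countable : ∀ ω, (S ω).Countable
  poisson : ∀ A : Set (Euc d × Euc d), MeasurableSet A → lineMeasure d A < ⊤ →
    ∀ k : ℕ, ℙ {ω | (S ω ∩ A).encard = (k : ℕ∞)} =
      ENNReal.ofReal (Real.exp (-(u * (lineMeasure d A).toReal)) *
        (u * (lineMeasure d A).toReal) ^ k / (Nat.factorial k))
  indep : ∀ (n : ℕ) (A : Fin n → Set (Euc d × Euc d)),
    (∀ i, MeasurableSet (A i)) → (Pairwise fun i j => Disjoint (A i) (A j)) →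
    ProbabilityTheory.iIndepFun
      (fun i ω => (S ω ∩ A i).encard) ℙ

/-!
A line whose unit cylinder meets both `0` and `closedBall x r` has its foot point `y` in the unit
ball of `v^⊥` (`v` its direction), and the parallel line `ℝ v` through the origin passes within
`2 + r` of `x`. So the fibre over `v` has `μH[d-1]`-measure at most that of a unit `(d-1)`-ball,
and `v` is confined to two antipodal caps of angular radius `O(r / ‖x‖)` around `± x / ‖x‖`.
A cap of tangent-radius `t` around `u` is the image of a `t`-ball of `u^⊥` under the central
projection `w ↦ (u + w) / ‖u + w‖`, which is `1`-Lipschitz since `‖u + w‖ ≥ 1`; hence its measure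
is `O(t ^ (d-1))`, and `r = c ‖x‖ ^ a` gives `O(‖x‖ ^ ((a-1)(d-1)))`. When `r / ‖x‖` is not small,
the whole sphere, of finite measure by compactness, gives the bound.
-/

open Module Metric

section Geometry

variable {E : Type*} [NormedAddCommGroup E] [InnerProductSpace ℝ E]

theorem dist_normalize_le {x y : E} (hx : 1 ≤ ‖x‖) (hy : 1 ≤ ‖y‖) :
    dist (NormedSpace.normalize x) (NormedSpace.normalize y) ≤ dist x y := by
  have ha : 0 < ‖x‖ := one_pos.trans_le hx
  have hb : 0 < ‖y‖ := one_pos.trans_le hy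
  have hxy := real_inner_le_norm x y
  rw [dist_eq_norm, dist_eq_norm, ← sq_le_sq₀ (norm_nonneg _) (norm_nonneg _),
    NormedSpace.normalize, NormedSpace.normalize, norm_sub_sq_real, norm_sub_sq_real, norm_smul,
    norm_smul, real_inner_smul_left, real_inner_smul_right, norm_inv, norm_norm, norm_inv,
    norm_norm, inv_mul_cancel₀ ha.ne', inv_mul_cancel₀ hb.ne']
  have hab : 1 ≤ ‖x‖ * ‖y‖ := one_le_mul_of_one_le_of_one_le hx hy
  rw [← sub_nonneg]
  have key : ‖x‖ ^ 2 - 2 * ⟪x, y⟫ + ‖y‖ ^ 2 - (1 ^ 2 - 2 * (‖x‖⁻¹ * (‖y‖⁻¹ * ⟪x, y⟫)) + 1 ^ 2)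
      = (‖x‖ - ‖y‖) ^ 2 + 2 * (‖x‖ * ‖y‖ - ⟪x, y⟫) * (‖x‖ * ‖y‖ - 1) / (‖x‖ * ‖y‖) := by
    field_simp
    ring
  rw [key]
  have : 0 ≤ ‖x‖ * ‖y‖ - ⟪x, y⟫ := by linarith
  have : 0 ≤ ‖x‖ * ‖y‖ - 1 := by linarith
  positivity

theorem norm_sub_inner_smul_sq {u : E} (hu : ‖u‖ = 1) (w : E) :
    ‖w - ⟪w, u⟫ • u‖ ^ 2 = ‖w‖ ^ 2 - ⟪w, u⟫ ^ 2 := by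
  rw [norm_sub_sq_real, real_inner_smul_right, norm_smul, hu, Real.norm_eq_abs, mul_one, sq_abs]
  ring

theorem norm_sub_inner_smul_le {u : E} (hu : ‖u‖ = 1) (w : E) :
    ‖w - ⟪w, u⟫ • u‖ ≤ ‖w‖ := by
  rw [← sq_le_sq₀ (norm_nonneg _) (norm_nonneg _), norm_sub_inner_smul_sq hu]
  nlinarith

theorem exists_linearIsometry_range_eq_orthogonal {n : ℕ} (hn : finrank ℝ E = n + 1) {u : E}
    (hu : u ≠ 0) :
    ∃ L : EuclideanSpace ℝ (Fin n) →ₗᵢ[ℝ] E, range L = {y | ⟪u, y⟫ = 0} := by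
  have : Fact (finrank ℝ E = n + 1) := ⟨hn⟩
  refine ⟨(ℝ ∙ u)ᗮ.subtypeₗᵢ.comp
    (OrthonormalBasis.fromOrthogonalSpanSingleton n hu).repr.symm.toLinearIsometry, ?_⟩
  ext y
  simp [Submodule.mem_orthogonal_singleton_iff_inner_right]

/-- Unit vectors whose angle with `u` is at most `arctan t`. -/
def sphereCap (u : E) (t : ℝ) : Set E :=
  {v | ‖v‖ = 1 ∧ 0 < ⟪v, u⟫ ∧ ‖v - ⟪v, u⟫ • u‖ ≤ t * ⟪v, u⟫}

def directionsNear (x : E) (ρ : ℝ) : Set E :=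
  {v | ‖v‖ = 1 ∧ ‖x - ⟪x, v⟫ • v‖ ≤ ρ}

theorem directionsNear_smul {a : ℝ} (ha : 0 < a) (x : E) (ρ : ℝ) :
    directionsNear (a • x) (a * ρ) = directionsNear x ρ := by
  ext v
  have : a • x - ⟪a • x, v⟫ • v = a • (x - ⟪x, v⟫ • v) := by
    rw [real_inner_smul_left, smul_sub, smul_smul]
  simp only [directionsNear, mem_ofPred_eq, this, norm_smul, Real.norm_of_nonneg ha.le,
    mul_le_mul_iff_right₀ ha]

theorem directionsNear_eq_normalize {x : E} (hx : x ≠ 0) (ρ : ℝ) :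
    directionsNear x ρ = directionsNear (NormedSpace.normalize x) (ρ / ‖x‖) := by
  have hx0 : 0 < ‖x‖ := norm_pos_iff.2 hx
  conv_lhs => rw [← NormedSpace.norm_smul_normalize x, ← mul_div_cancel₀ ρ hx0.ne']
  exact directionsNear_smul hx0 _ _

theorem directionsNear_subset_sphereCap {u : E} (hu : ‖u‖ = 1) {s : ℝ} (hs : s ≤ 1 / 2) :
    directionsNear u s ⊆ sphereCap u (2 * s) ∪ sphereCap (-u) (2 * s) := by
  rintro v ⟨hv, hvs⟩
  set c := ⟪v, u⟫
  have hvc : ‖v - c • u‖ ≤ s := by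
    have : ‖v - c • u‖ ^ 2 = ‖u - ⟪u, v⟫ • v‖ ^ 2 := by
      rw [norm_sub_inner_smul_sq hu, norm_sub_inner_smul_sq hv, hu, hv, real_inner_comm]
    rwa [(sq_eq_sq₀ (norm_nonneg _) (norm_nonneg _)).1 this]
  have hc : 1 / 2 ≤ |c| := by
    have := norm_sub_inner_smul_sq hu v
    rw [hv] at this
    nlinarith [norm_nonneg (v - c • u), abs_nonneg c, sq_abs c]
  have hs0 : 0 ≤ s := (norm_nonneg _).trans hvc
  rcases le_or_gt 0 c with hc0 | hc0
  · rw [abs_of_nonneg hc0] at hc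
    exact Or.inl ⟨hv, by linarith, hvc.trans (by nlinarith)⟩
  · rw [abs_of_neg hc0] at hc
    refine Or.inr ⟨hv, ?_, ?_⟩ <;> rw [inner_neg_right]
    · linarith
    · rw [neg_smul_neg]
      exact hvc.trans (by nlinarith)

end Geometry

section Hausdorff

variable {E : Type*} [NormedAddCommGroup E] [InnerProductSpace ℝ E]
  [MeasurableSpace E] [BorelSpace E] {n : ℕ}

theorem hausdorffMeasure_orthogonal_closedBall (hn : finrank ℝ E = n + 1) {u : E} (hu : u ≠ 0) :
    μH[n] {y : E | ⟪u, y⟫ = 0 ∧ ‖y‖ ≤ 1}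
      = μH[n] (closedBall (0 : EuclideanSpace ℝ (Fin n)) 1) := by
  obtain ⟨L, hL⟩ := exists_linearIsometry_range_eq_orthogonal hn hu
  have : {y : E | ⟪u, y⟫ = 0 ∧ ‖y‖ ≤ 1} = L '' closedBall 0 1 := by
    ext y
    constructor
    · rintro ⟨hy, hy1⟩
      obtain ⟨w, rfl⟩ : y ∈ range L := hL ▸ hy
      exact ⟨w, by simpa using hy1, rfl⟩
    · rintro ⟨w, hw, rfl⟩
      exact ⟨hL.subset (mem_range_self w), by simpa using hw⟩
  rw [this, L.isometry.hausdorffMeasure_image (Or.inl n.cast_nonneg)]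

theorem hausdorffMeasure_sphereCap_le (hn : finrank ℝ E = n + 1) {u : E} (hu : ‖u‖ = 1)
    {t : ℝ} (ht : 0 < t) :
    μH[n] (sphereCap u t)
      ≤ ENNReal.ofReal t ^ n * μH[n] (closedBall (0 : EuclideanSpace ℝ (Fin n)) 1) := by
  obtain ⟨L, hL⟩ :=
    exists_linearIsometry_range_eq_orthogonal hn (norm_ne_zero_iff.mp (hu ▸ one_ne_zero))
  have hperp (w : EuclideanSpace ℝ (Fin n)) : ⟪u, L w⟫ = 0 := hL.subset (mem_range_self w)
  have hnorm (z : E) (hz : ⟪u, z⟫ = 0) : 1 ≤ ‖u + z‖ := by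
    have := norm_add_sq_real u z
    rw [hu, hz] at this
    nlinarith [norm_nonneg (u + z), norm_nonneg z]
  let f := fun w => NormedSpace.normalize (u + t • L w)
  have hf : LipschitzWith t.toNNReal f := by
    refine LipschitzWith.of_dist_le_mul fun w w' => ?_
    have hperp' (w) : ⟪u, t • L w⟫ = 0 := by rw [real_inner_smul_right, hperp, mul_zero]
    calc dist (f w) (f w') ≤ dist (u + t • L w) (u + t • L w') :=
          dist_normalize_le (hnorm _ (hperp' w)) (hnorm _ (hperp' w'))
      _ = t.toNNReal * dist w w' := by
          rw [dist_add_left, dist_smul₀, L.isometry.dist_eq, Real.norm_of_nonneg ht.le,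
            Real.coe_toNNReal _ ht.le]
  have hcap : sphereCap u t ⊆ f '' closedBall 0 1 := by
    rintro v ⟨hv, hc, hvt⟩
    set c := ⟪v, u⟫
    obtain ⟨z, hz⟩ : c⁻¹ • (v - c • u) ∈ range L := by
      refine hL.superset ?_
      simp only [mem_ofPred_eq, real_inner_smul_right, inner_sub_right,
        real_inner_self_eq_norm_sq, hu, real_inner_comm v u]
      field_simp
      ring
    refine ⟨t⁻¹ • z, ?_, ?_⟩
    · rw [mem_closedBall_zero_iff, norm_smul, ← L.norm_map, hz, norm_smul, Real.norm_of_nonneg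
        (inv_pos.mpr ht).le, Real.norm_of_nonneg (inv_pos.mpr hc).le, ← mul_assoc,
        ← mul_inv, inv_mul_le_one₀ (mul_pos ht hc)]
      exact hvt
    · have : u + c⁻¹ • (v - c • u) = c⁻¹ • v := by
        rw [smul_sub, smul_smul, inv_mul_cancel₀ hc.ne', one_smul, add_sub_cancel]
      change NormedSpace.normalize (u + t • L (t⁻¹ • z)) = v
      rw [map_smul, smul_smul, mul_inv_cancel₀ ht.ne', one_smul, hz, this,
        NormedSpace.normalize_smul_of_pos (inv_pos.mpr hc),
        NormedSpace.normalize_eq_self_of_norm_eq_one hv]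
  calc μH[n] (sphereCap u t) ≤ μH[n] (f '' closedBall 0 1) := measure_mono hcap
    _ ≤ (t.toNNReal : ℝ≥0∞) ^ (n : ℝ) * μH[n] (closedBall (0 : EuclideanSpace ℝ (Fin n)) 1) :=
      hf.hausdorffMeasure_image_le n.cast_nonneg _
    _ = _ := by rw [ENNReal.rpow_natCast]; rfl

theorem hausdorffMeasure_sphere_lt_top (hn : finrank ℝ E = n + 1) :
    μH[n] (sphere (0 : E) 1) < ⊤ := by
  have : FiniteDimensional ℝ E := Module.finite_of_finrank_pos (by omega)
  have hball : μH[n] (closedBall (0 : EuclideanSpace ℝ (Fin n)) 1) < ⊤ :=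
    (isCompact_closedBall _ _).measure_lt_top
  obtain ⟨s, hs⟩ := (isCompact_sphere (0 : E) 1).elim_finite_subcover
    (fun u : sphere (0 : E) 1 => {v : E | 1 / 2 < ⟪v, (u : E)⟫})
    (fun u => isOpen_lt continuous_const (by fun_prop))
    (fun v hv => mem_iUnion.2 ⟨⟨v, hv⟩, by norm_num [mem_sphere_zero_iff_norm.1 hv]⟩)
  have hcover : sphere (0 : E) 1 ⊆ ⋃ u ∈ s, sphereCap (u : E) 2 := by
    intro v hv
    obtain ⟨u, hu, huv⟩ := mem_iUnion₂.1 (hs hv)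
    have hv1 : ‖v‖ = 1 := mem_sphere_zero_iff_norm.1 hv
    refine mem_iUnion₂.2 ⟨u, hu, hv1, by linarith [huv.out], ?_⟩
    calc ‖v - ⟪v, (u : E)⟫ • (u : E)‖ ≤ ‖v‖ :=
          norm_sub_inner_smul_le (norm_eq_of_mem_sphere u) v
      _ ≤ 2 * ⟪v, (u : E)⟫ := by rw [hv1]; linarith [huv.out]
  calc μH[n] (sphere (0 : E) 1) ≤ μH[n] (⋃ u ∈ s, sphereCap (u : E) 2) := measure_mono hcover
    _ ≤ ∑ u ∈ s, μH[n] (sphereCap (u : E) 2) := measure_biUnion_finset_le _ _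
    _ < ⊤ := ENNReal.sum_lt_top.2 fun u _ =>
      (hausdorffMeasure_sphereCap_le hn (norm_eq_of_mem_sphere u) two_pos).trans_lt
        (ENNReal.mul_lt_top (by simp) hball)

theorem hausdorffMeasure_directionsNear_le (hn : finrank ℝ E = n + 1) :
    ∃ C < ⊤, ∀ u : E, ‖u‖ = 1 → ∀ s : ℝ, 0 < s →
      μH[n] (directionsNear u s) ≤ C * ENNReal.ofReal s ^ n := by
  set D := μH[n] (closedBall (0 : EuclideanSpace ℝ (Fin n)) 1)
  set S := μH[n] (sphere (0 : E) 1)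
  have hD : D < ⊤ := (isCompact_closedBall _ _).measure_lt_top
  refine ⟨2 ^ n * (2 * D + S), ?_, fun u hu s hs => ?_⟩
  · exact ENNReal.mul_lt_top (by simp) (ENNReal.add_lt_top.2
      ⟨ENNReal.mul_lt_top (by simp) hD, hausdorffMeasure_sphere_lt_top hn⟩)
  have h2s : ENNReal.ofReal (2 * s) ^ n = 2 ^ n * ENNReal.ofReal s ^ n := by
    rw [ENNReal.ofReal_mul zero_le_two, ENNReal.ofReal_ofNat, mul_pow]
  rw [mul_add, add_mul]
  rcases le_or_gt s (1 / 2) with hs2 | hs2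
  · refine le_add_right ?_
    calc μH[n] (directionsNear u s)
        ≤ μH[n] (sphereCap u (2 * s)) + μH[n] (sphereCap (-u) (2 * s)) :=
          (measure_mono (directionsNear_subset_sphereCap hu hs2)).trans (measure_union_le _ _)
      _ ≤ ENNReal.ofReal (2 * s) ^ n * D + ENNReal.ofReal (2 * s) ^ n * D :=
          add_le_add (hausdorffMeasure_sphereCap_le hn hu (by positivity))
            (hausdorffMeasure_sphereCap_le hn (by rwa [norm_neg]) (by positivity))
      _ = 2 ^ n * (2 * D) * ENNReal.ofReal s ^ n := by rw [h2s]; ring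
  · refine le_add_left ?_
    calc μH[n] (directionsNear u s) ≤ S :=
          measure_mono fun v hv => mem_sphere_zero_iff_norm.2 hv.1
      _ ≤ ENNReal.ofReal (2 * s) ^ n * S :=
          le_mul_of_one_le_left' (one_le_pow₀ (ENNReal.one_le_ofReal.2 (by linarith)))
      _ = 2 ^ n * S * ENNReal.ofReal s ^ n := by rw [h2s]; ring

end Hausdorff

section Lines

variable {d : ℕ}

theorem norm_sub_inner_smul_sub_le_of_mem_cylOf {p : Euc d × Euc d} (hp : p ∈ LineParam d)
    {z : Euc d} (hz : z ∈ cylOf p) : ‖z - ⟪z, p.1⟫ • p.1 - p.2‖ ≤ 1 := by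
  obtain ⟨hv, hvy⟩ := hp
  obtain ⟨w, ⟨t, rfl⟩, hzw⟩ := hz
  have : z - ⟪z, p.1⟫ • p.1 - p.2
      = (z - (p.2 + t • p.1)) - ⟪z - (p.2 + t • p.1), p.1⟫ • p.1 := by
    rw [inner_sub_left, inner_add_left, real_inner_smul_left, real_inner_self_eq_norm_sq, hv,
      real_inner_comm p.1 p.2, hvy]
    module
  rw [this]
  exact (norm_sub_inner_smul_le hv _).trans (dist_eq_norm z _ ▸ hzw)

theorem norm_snd_le_one_of_mem_linesMeeting_zero {p : Euc d × Euc d}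
    (h : p ∈ linesMeeting ({0} : Set (Euc d))) : ‖p.2‖ ≤ 1 := by
  obtain ⟨hp, z, hz, rfl⟩ := h
  simpa using norm_sub_inner_smul_sub_le_of_mem_cylOf hp hz

theorem mem_directionsNear_of_mem_linesMeeting {p : Euc d × Euc d} {x : Euc d} {r : ℝ}
    (h0 : p ∈ linesMeeting ({0} : Set (Euc d))) (hx : p ∈ linesMeeting (closedBall x r)) :
    p.1 ∈ directionsNear x (2 + r) := by
  obtain ⟨hp, z, hz, hzx⟩ := hx
  refine ⟨hp.1, ?_⟩
  have : x - ⟪x, p.1⟫ • p.1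
      = ((x - z) - ⟪x - z, p.1⟫ • p.1) + (z - ⟪z, p.1⟫ • p.1 - p.2) + p.2 := by
    rw [inner_sub_left]
    module
  calc ‖x - ⟪x, p.1⟫ • p.1‖
      ≤ ‖(x - z) - ⟪x - z, p.1⟫ • p.1‖ + ‖z - ⟪z, p.1⟫ • p.1 - p.2‖ + ‖p.2‖ :=
        this ▸ norm_add₃_le
    _ ≤ r + 1 + 1 := by
        gcongr
        · exact (norm_sub_inner_smul_le hp.1 _).trans (by rwa [← dist_eq_norm, dist_comm])
        · exact norm_sub_inner_smul_sub_le_of_mem_cylOf hp hz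
        · exact norm_snd_le_one_of_mem_linesMeeting_zero h0
    _ = 2 + r := by ring

theorem lineMeasure_le_of_forall_mem {n : ℕ} {A : Set (Euc (n + 1) × Euc (n + 1))}
    {V : Set (Euc (n + 1))} (hA : ∀ p ∈ A, p.1 ∈ V ∧ ‖p.2‖ ≤ 1) :
    lineMeasure (n + 1) A ≤ μH[n] (closedBall (0 : Euc n) 1) * μH[n] V := by
  set D := μH[n] (closedBall (0 : Euc n) 1) with hD
  have hfiber : ∀ v ∈ sphere (0 : Euc (n + 1)) 1,
      μH[n] {y | ⟪v, y⟫ = 0 ∧ (v, y) ∈ A} ≤ V.indicator (fun _ => D) v := by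
    intro v hv
    by_cases hvV : v ∈ V
    · rw [indicator_of_mem hvV, hD, ← hausdorffMeasure_orthogonal_closedBall
        finrank_euclideanSpace_fin (ne_of_mem_sphere hv one_ne_zero)]
      exact measure_mono fun y hy => ⟨hy.1, (hA _ hy.2).2⟩
    · rw [indicator_of_notMem hvV]
      exact (measure_mono_null (fun y hy => (hvV (hA _ hy.2).1).elim) measure_empty).le
  have hexp : ((n + 1 : ℕ) : ℝ) - 1 = n := by push_cast; ring
  calc lineMeasure (n + 1) A
      = ∫⁻ v in sphere (0 : Euc (n + 1)) 1, μH[n] {y | ⟪v, y⟫ = 0 ∧ (v, y) ∈ A} ∂μH[n] := by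
        rw [lineMeasure, hexp]
    _ ≤ ∫⁻ v in sphere (0 : Euc (n + 1)) 1, V.indicator (fun _ => D) v ∂μH[n] :=
        setLIntegral_mono' isClosed_sphere.measurableSet hfiber
    _ ≤ D * (μH[n].restrict (sphere (0 : Euc (n + 1)) 1)) V := lintegral_indicator_const_le _ _
    _ ≤ D * μH[n] V := mul_le_mul_right (Measure.restrict_apply_le _ _) D

end Lines

theorem div_le_mul_rpow_sub_one {X a b c : ℝ} (hX : 1 ≤ X) (ha : 0 < a) (hb : 0 ≤ b) :
    (b + c * X ^ a) / X ≤ (b + c) * X ^ (a - 1) := by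
  have hX0 : 0 < X := one_pos.trans_le hX
  rw [Real.rpow_sub_one hX0.ne', ← mul_div_assoc]
  gcongr
  nlinarith [Real.one_le_rpow hX ha.le]

/-- **Corollary (visibility of a ball from a point).** Let `d ≥ 3`. For every `a ∈ (0, 1)`
and `c > 0` there is `K > 0` such that for all `x` with `|x| ≥ 1`,
`μ(𝓛({0}) ∩ 𝓛(x + B_{c·|x|^a})) ≤ K·|x|^{(a-1)(d-1)}`. -/
theorem measure_lines_point_to_ball (d : ℕ) (hd : 3 ≤ d)
    (a : ℝ) (ha : a ∈ Set.Ioo (0 : ℝ) 1) (c : ℝ) (hc : 0 < c) :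
    ∃ K : ℝ, 0 < K ∧ ∀ x : Euc d, 1 ≤ ‖x‖ →
      lineMeasure d
          (linesMeeting ({0} : Set (Euc d)) ∩ linesMeeting (Metric.closedBall x (c * ‖x‖ ^ a)))
        ≤ ENNReal.ofReal (K * ‖x‖ ^ ((a - 1) * ((d : ℝ) - 1))) := by
  obtain ⟨n, rfl⟩ : ∃ n, d = n + 1 := ⟨d - 1, by omega⟩
  obtain ⟨C, hC, hdir⟩ :=
    hausdorffMeasure_directionsNear_le (E := Euc (n + 1)) finrank_euclideanSpace_fin
  set D := μH[n] (closedBall (0 : Euc n) 1)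
  have hDC : D * C ≠ ⊤ := (ENNReal.mul_lt_top (isCompact_closedBall _ _).measure_lt_top hC).ne
  refine ⟨(D * C).toReal * (2 + c) ^ n + 1, by positivity, fun x hx => ?_⟩
  have hx0 : 0 < ‖x‖ := one_pos.trans_le hx
  have hexp : ((n + 1 : ℕ) : ℝ) - 1 = n := by push_cast; ring
  calc lineMeasure (n + 1)
        (linesMeeting {0} ∩ linesMeeting (closedBall x (c * ‖x‖ ^ a)))
      ≤ D * μH[n] (directionsNear x (2 + c * ‖x‖ ^ a)) :=
        lineMeasure_le_of_forall_mem fun p hp => ⟨mem_directionsNear_of_mem_linesMeeting hp.1 hp.2,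
          norm_snd_le_one_of_mem_linesMeeting_zero hp.1⟩
    _ ≤ D * (C * ENNReal.ofReal ((2 + c) * ‖x‖ ^ (a - 1)) ^ n) := by
        rw [directionsNear_eq_normalize (norm_pos_iff.1 hx0)]
        refine mul_le_mul_right ((hdir _ (NormedSpace.norm_normalize_eq_one_iff.2
          (norm_pos_iff.1 hx0)) _ (by positivity)).trans ?_) D
        gcongr
        exact div_le_mul_rpow_sub_one hx ha.1 zero_le_two
    _ = ENNReal.ofReal ((D * C).toReal * (2 + c) ^ n * ‖x‖ ^ ((a - 1) * n)) := by
        rw [mul_assoc _ ((2 + c) ^ n), ENNReal.ofReal_mul ENNReal.toReal_nonneg,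
          ENNReal.ofReal_toReal hDC, Real.rpow_mul_natCast hx0.le, ← mul_pow,
          ENNReal.ofReal_pow (by positivity), mul_assoc]
    _ ≤ _ := by
        rw [hexp]
        gcongr
        linarith
end
end

section
/- Let (Ω, 𝓐, ℙ) be a probability space with a filtration (𝓕_n)_{n=0}^N, and let X₁, …, X_N be ℕ-valued random variables such that X_n is 𝓕_n-measurable and, for real constants u > 0 and μ₁, …, μ_N satisfying μ_n ≥ μ₀ > 0 for all n, the conditional law of X_n given 𝓕_{n−1} is Poisson with mean u·μ_n; that is, for every n ∈ {1, …, N} and every k ∈ ℕ, ℙ[X_n = k | 𝓕_{n−1}] = e^{−u·μ_n}·(u·μ_n)^k / k! almost surely. Set I_n = 1{X_n > 0} and p = 1 − e^{−u·μ₀} ∈ (0, 1). Then ℙ( ∑_{n=1}^N I_n ≤ p·N/2 ) ≤ exp( −p²·N/8 ). -/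
/-!
Put `t = p / 2`. Given `𝓕_{n-1}`, the indicator `I_n` equals `1` with probability at least
`1 - e^{-u μ_n} ≥ p`, so `exp (-t I_n) = 1 - (1 - e^{-t}) I_n` has conditional mean at most
`c = 1 - (1 - e^{-t}) p ≤ exp (-(1 - e^{-t}) p)`. Peeling off one factor at a time gives
`𝔼 exp (-t ∑ I_n) ≤ c^N`, and Markov's inequality for `exp (-t ∑ I_n)` together with
`1 - e^{-t} ≥ t - t² / 2` yields `exp (-p² N / 8)`.
-/

open MeasureTheory Real

lemma Real.exp_neg_mul_mem_Icc {t x : ℝ} (ht : 0 ≤ t) (hx : 0 ≤ x) :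
    exp (-t * x) ∈ Set.Icc (0 : ℝ) 1 :=
  ⟨(exp_pos _).le, exp_le_one_iff.2 (mul_nonpos_of_nonpos_of_nonneg (neg_nonpos.2 ht) hx)⟩

lemma Real.exp_neg_le_one_sub_add_sq_div_two {t : ℝ} (ht : 0 ≤ t) :
    exp (-t) ≤ 1 - t + t ^ 2 / 2 := by
  have hpos : 0 < 1 + t + t ^ 2 / 2 := by positivity
  calc exp (-t) = (exp t)⁻¹ := exp_neg t
    _ ≤ (1 + t + t ^ 2 / 2)⁻¹ := inv_anti₀ hpos (quadratic_le_exp_of_nonneg ht)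
    _ ≤ 1 - t + t ^ 2 / 2 := by
      -- `(1 + t + t² / 2) (1 - t + t² / 2) = 1 + t⁴ / 4`
      rw [inv_le_iff_one_le_mul₀ hpos]
      nlinarith [sq_nonneg (t ^ 2)]

lemma Real.three_mul_sq_div_eight_le_mul_one_sub_exp_neg_half {p : ℝ} (hp0 : 0 ≤ p)
    (hp1 : p ≤ 1) : 3 * p ^ 2 / 8 ≤ p * (1 - exp (-(p / 2))) := by
  have := exp_neg_le_one_sub_add_sq_div_two (t := p / 2) (by positivity)
  nlinarith [mul_nonneg hp0 hp0, mul_nonneg (mul_nonneg hp0 hp0) (sub_nonneg.2 hp1)]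

section

variable {Ω : Type*} [m0 : MeasurableSpace Ω] {μ : Measure Ω}

lemma integral_mul_le_of_condExp_le [IsFiniteMeasure μ] {m : MeasurableSpace Ω} (hm : m ≤ m0)
    {f g : Ω → ℝ} {c : ℝ} (hf : StronglyMeasurable[m] f) (hf0 : 0 ≤ᵐ[μ] f)
    (hfi : Integrable f μ) (hg : Integrable g μ) (hfg : Integrable (f * g) μ)
    (hgc : μ[g|m] ≤ᵐ[μ] fun _ => c) :
    ∫ ω, f ω * g ω ∂μ ≤ c * ∫ ω, f ω ∂μ := by
  have hpull := condExp_mul_of_stronglyMeasurable_left hf hfg hg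
  calc ∫ ω, f ω * g ω ∂μ = ∫ ω, μ[f * g|m] ω ∂μ := (integral_condExp hm).symm
    _ = ∫ ω, f ω * μ[g|m] ω ∂μ := integral_congr_ae hpull
    _ ≤ ∫ ω, f ω * c ∂μ := by
      refine integral_mono_ae (integrable_condExp.congr hpull) (hfi.mul_const c) ?_
      filter_upwards [hgc, hf0] with ω hω hω0
      exact mul_le_mul_of_nonneg_left hω hω0
    _ = c * ∫ ω, f ω ∂μ := by rw [integral_mul_const, mul_comm]

lemma integral_prod_Icc_le_pow [IsProbabilityMeasure μ] (𝓕 : Filtration ℕ m0)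
    {Y : ℕ → Ω → ℝ} {c : ℝ} (hc : 0 ≤ c) {N : ℕ}
    (hY : ∀ n, 1 ≤ n → n ≤ N → Measurable[𝓕 n] (Y n))
    (hY01 : ∀ n ω, Y n ω ∈ Set.Icc (0 : ℝ) 1)
    (hYc : ∀ n, 1 ≤ n → n ≤ N → μ[Y n|𝓕 (n - 1)] ≤ᵐ[μ] fun _ => c) :
    ∫ ω, ∏ n ∈ Finset.Icc 1 N, Y n ω ∂μ ≤ c ^ N := by
  induction N with
  | zero => simp
  | succ N ih =>
    have ih := ih (fun n h1 h2 => hY n h1 (h2.trans N.le_succ))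
      (fun n h1 h2 => hYc n h1 (h2.trans N.le_succ))
    have hS : Measurable[𝓕 N] fun ω => ∏ n ∈ Finset.Icc 1 N, Y n ω :=
      Finset.measurable_prod _ fun n hn => by
        rw [Finset.mem_Icc] at hn
        exact (hY n hn.1 (hn.2.trans N.le_succ)).mono (𝓕.mono hn.2) le_rfl
    have hS01 : ∀ ω, ∏ n ∈ Finset.Icc 1 N, Y n ω ∈ Set.Icc (0 : ℝ) 1 := fun ω =>
      ⟨Finset.prod_nonneg fun n _ => (hY01 n ω).1,
        Finset.prod_le_one (fun n _ => (hY01 n ω).1) fun n _ => (hY01 n ω).2⟩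
    have hSY01 : ∀ ω, (∏ n ∈ Finset.Icc 1 N, Y n ω) * Y (N + 1) ω ∈ Set.Icc (0 : ℝ) 1 :=
      fun ω => ⟨mul_nonneg (hS01 ω).1 (hY01 _ ω).1,
        mul_le_one₀ (hS01 ω).2 (hY01 _ ω).1 (hY01 _ ω).2⟩
    have hSm := (hS.mono (𝓕.le N) le_rfl).aemeasurable (μ := μ)
    have hYm := ((hY (N + 1) le_add_self le_rfl).mono (𝓕.le _) le_rfl).aemeasurable (μ := μ)
    simp_rw [Finset.prod_Icc_succ_top (Nat.le_add_left 1 N)]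
    calc ∫ ω, (∏ n ∈ Finset.Icc 1 N, Y n ω) * Y (N + 1) ω ∂μ
        ≤ c * ∫ ω, ∏ n ∈ Finset.Icc 1 N, Y n ω ∂μ :=
          integral_mul_le_of_condExp_le (𝓕.le N) hS.stronglyMeasurable
            (ae_of_all _ fun ω => (hS01 ω).1) (.of_mem_Icc 0 1 hSm (ae_of_all _ hS01))
            (.of_mem_Icc 0 1 hYm (ae_of_all _ (hY01 _)))
            (.of_mem_Icc 0 1 (hSm.mul hYm) (ae_of_all _ hSY01))
            (by simpa using hYc (N + 1) le_add_self le_rfl)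
      _ ≤ c * c ^ N := mul_le_mul_of_nonneg_left ih hc
      _ = c ^ (N + 1) := (pow_succ' c N).symm

lemma condExp_exp_neg_mul_le [IsFiniteMeasure μ] {m : MeasurableSpace Ω} (hm : m ≤ m0)
    {I : Ω → ℝ} (hI : Integrable I μ) (hI01 : ∀ ω, I ω = 0 ∨ I ω = 1) {p t : ℝ} (ht : 0 ≤ t)
    (hp : (fun _ => p) ≤ᵐ[μ] μ[I|m]) :
    μ[fun ω => exp (-t * I ω)|m] ≤ᵐ[μ] fun _ => 1 - (1 - exp (-t)) * p := by
  have hlin : (fun ω => exp (-t * I ω)) = (fun _ => 1) - (1 - exp (-t)) • I := by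
    funext ω
    rcases hI01 ω with h | h <;> simp [h]
  have hdecay : 0 ≤ 1 - exp (-t) := sub_nonneg.2 (exp_le_one_iff.2 (neg_nonpos.2 ht))
  rw [hlin]
  filter_upwards [condExp_sub (integrable_const 1) (hI.smul (1 - exp (-t))) m,
    condExp_smul (m := m) (μ := μ) (1 - exp (-t)) I, hp] with ω hsub hsmul hpω
  rw [hsub, Pi.sub_apply, hsmul, condExp_const hm, Pi.smul_apply, smul_eq_mul]
  nlinarith

lemma condExp_ite_pos_ae_eq_one_sub [IsFiniteMeasure μ] {m : MeasurableSpace Ω} (hm : m ≤ m0)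
    {X : Ω → ℕ} (hX : Measurable[m0] X) {q : ℝ}
    (hq : μ[fun ω => if X ω = 0 then (1 : ℝ) else 0|m] =ᵐ[μ] fun _ => q) :
    μ[fun ω => if 0 < X ω then (1 : ℝ) else 0|m] =ᵐ[μ] fun _ => 1 - q := by
  have hcompl : (fun ω => if 0 < X ω then (1 : ℝ) else 0)
      = (fun _ => 1) - fun ω => if X ω = 0 then (1 : ℝ) else 0 := by
    funext ω
    by_cases h : X ω = 0 <;> simp [h, Nat.pos_iff_ne_zero]
  have hZm : Measurable[m0] fun ω => if X ω = 0 then (1 : ℝ) else 0 :=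
    Measurable.ite (hX (measurableSet_singleton 0)) measurable_const measurable_const
  have hZ : Integrable (fun ω => if X ω = 0 then (1 : ℝ) else 0) μ :=
    .of_mem_Icc 0 1 hZm.aemeasurable (ae_of_all _ fun ω => by split_ifs <;> simp)
  rw [hcompl]
  filter_upwards [condExp_sub (integrable_const 1) hZ m, hq] with ω hsub hqω
  rw [hsub, Pi.sub_apply, hqω, condExp_const hm]

section Chernoff

open ProbabilityTheory

variable [IsProbabilityMeasure μ] (𝓕 : Filtration ℕ m0) {I : ℕ → Ω → ℝ} {p : ℝ} {N : ℕ}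
  (hI01 : ∀ n ω, I n ω = 0 ∨ I n ω = 1) (hI : ∀ n, 1 ≤ n → n ≤ N → Measurable[𝓕 n] (I n))
  (hIp : ∀ n, 1 ≤ n → n ≤ N → (fun _ => p) ≤ᵐ[μ] μ[I n|𝓕 (n - 1)])
include hI01 hI hIp

lemma mgf_neg_sum_Icc_le_pow (hp1 : p ≤ 1) {t : ℝ} (ht : 0 ≤ t) :
    mgf (fun ω => ∑ n ∈ Finset.Icc 1 N, I n ω) μ (-t) ≤ (1 - (1 - exp (-t)) * p) ^ N := by
  have hI_mem : ∀ n ω, I n ω ∈ Set.Icc (0 : ℝ) 1 := fun n ω => by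
    rcases hI01 n ω with h | h <;> simp [h]
  simp_rw [mgf, Finset.mul_sum, exp_sum]
  have hc : 0 ≤ 1 - (1 - exp (-t)) * p := by
    nlinarith [exp_pos (-t), mul_nonneg (sub_nonneg.2 hp1)
      (sub_nonneg.2 (exp_le_one_iff.2 (neg_nonpos.2 ht)))]
  refine integral_prod_Icc_le_pow 𝓕 hc
    (fun n h1 h2 => ((hI n h1 h2).const_mul _).exp)
    (fun n ω => exp_neg_mul_mem_Icc ht (hI_mem n ω).1)
    (fun n h1 h2 => condExp_exp_neg_mul_le (𝓕.le _) ?_ (hI01 n) ht (hIp n h1 h2))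
  exact .of_mem_Icc 0 1 ((hI n h1 h2).mono (𝓕.le n) le_rfl).aemeasurable
    (ae_of_all _ (hI_mem n))

theorem measure_sum_le_le_exp_of_condExp_ge (hp0 : 0 ≤ p) (hp1 : p ≤ 1) :
    μ {ω | ∑ n ∈ Finset.Icc 1 N, I n ω ≤ p * N / 2}
      ≤ ENNReal.ofReal (exp (-(p ^ 2 * N / 8))) := by
  set t := p / 2 with ht_def
  have ht : 0 ≤ t := by positivity
  have hI0 : ∀ n ω, 0 ≤ I n ω := fun n ω => by rcases hI01 n ω with h | h <;> simp [h]
  have hc : (1 - (1 - exp (-t)) * p) ^ N ≤ exp (-(N * (p * (1 - exp (-t))))) := by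
    rw [← mul_neg, exp_nat_mul]
    exact pow_le_pow_left₀ (by nlinarith [exp_pos (-t)])
      (by linarith [one_sub_le_exp_neg (p * (1 - exp (-t)))]) N
  have hsum : Measurable fun ω => ∑ n ∈ Finset.Icc 1 N, I n ω :=
    Finset.measurable_sum _ fun n hn => by
      rw [Finset.mem_Icc] at hn
      exact (hI n hn.1 hn.2).mono (𝓕.le n) le_rfl
  have hint : Integrable (fun ω => exp (-t * ∑ n ∈ Finset.Icc 1 N, I n ω)) μ :=
    .of_mem_Icc 0 1 (hsum.const_mul _).exp.aemeasurable <| ae_of_all _ fun ω =>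
      exp_neg_mul_mem_Icc ht (Finset.sum_nonneg fun n _ => hI0 n ω)
  have hgap := three_mul_sq_div_eight_le_mul_one_sub_exp_neg_half hp0 hp1
  rw [ENNReal.le_ofReal_iff_toReal_le (measure_ne_top _ _) (exp_nonneg _), ← measureReal_def]
  calc μ.real {ω | ∑ n ∈ Finset.Icc 1 N, I n ω ≤ p * N / 2}
      ≤ exp (-(-t) * (p * N / 2)) * mgf (fun ω => ∑ n ∈ Finset.Icc 1 N, I n ω) μ (-t) :=
        measure_le_le_exp_mul_mgf _ (neg_nonpos.2 ht) hint
    _ ≤ exp (t * (p * N / 2)) * exp (-(N * (p * (1 - exp (-t))))) := by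
        rw [neg_neg]
        gcongr
        exact (mgf_neg_sum_Icc_le_pow 𝓕 hI01 hI hIp hp1 ht).trans hc
    _ ≤ exp (-(p ^ 2 * N / 8)) := by
        rw [← exp_add, exp_le_exp, ht_def]
        nlinarith [mul_le_mul_of_nonneg_left hgap N.cast_nonneg]

end Chernoff

end

/-- **Lemma 4.1 (Azuma–Hoeffding for conditionally Poisson counts).** If, with respect to
a filtration `𝓕`, each `X_n` is `𝓕 n`-measurable and its conditional law given `𝓕 (n-1)`
is Poisson with mean `u·μ_n`, where `μ_n ≥ μ₀ > 0`, then with `I_n = 1{X_n > 0}` and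
`p = 1 - exp(-u·μ₀)` we have `ℙ(∑_{n=1}^N I_n ≤ pN/2) ≤ exp(-p²N/8)`. -/
theorem azuma_poisson_counts {Ω : Type*} [m0 : MeasurableSpace Ω]
    (ℙ : Measure Ω) [IsProbabilityMeasure ℙ]
    (N : ℕ) (𝓕 : ℕ → MeasurableSpace Ω) (hmono : Monotone 𝓕) (hle : ∀ n, 𝓕 n ≤ m0)
    (X : ℕ → Ω → ℕ) (hX : ∀ n, 1 ≤ n → n ≤ N → Measurable[𝓕 n] (X n))
    (u : ℝ) (hu : 0 < u) (μs : ℕ → ℝ) (μ₀ : ℝ) (hμ₀ : 0 < μ₀)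
    (hμs : ∀ n, 1 ≤ n → n ≤ N → μ₀ ≤ μs n)
    (hPoisson : ∀ n, 1 ≤ n → n ≤ N → ∀ k : ℕ,
      (MeasureTheory.condExp (𝓕 (n - 1)) ℙ (fun ω => if X n ω = k then (1 : ℝ) else 0))
        =ᵐ[ℙ] fun _ => Real.exp (-(u * μs n)) * (u * μs n) ^ k / (Nat.factorial k)) :
    ℙ {ω | ∑ n ∈ Finset.Icc 1 N, (if 0 < X n ω then (1 : ℝ) else 0)
          ≤ (1 - Real.exp (-(u * μ₀))) * N / 2}
      ≤ ENNReal.ofReal (Real.exp (-((1 - Real.exp (-(u * μ₀))) ^ 2 * N / 8))) := by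
  have hp0 : 0 ≤ 1 - exp (-(u * μ₀)) :=
    sub_nonneg.2 (exp_le_one_iff.2 (neg_nonpos.2 (mul_pos hu hμ₀).le))
  have hp1 : 1 - exp (-(u * μ₀)) ≤ 1 := sub_le_self _ (exp_pos _).le
  refine measure_sum_le_le_exp_of_condExp_ge ⟨𝓕, hmono, hle⟩
    (fun n ω => by by_cases h : 0 < X n ω <;> simp [h]) (fun n h1 h2 => ?_) (fun n h1 h2 => ?_)
    hp0 hp1
  · exact Measurable.ite (measurableSet_lt measurable_const (hX n h1 h2)) measurable_const
      measurable_const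
  · have hq := condExp_ite_pos_ae_eq_one_sub (hle _) ((hX n h1 h2).mono (hle n) le_rfl)
      (hPoisson n h1 h2 0)
    filter_upwards [hq] with ω hω
    rw [hω, pow_zero, Nat.factorial_zero, Nat.cast_one, mul_one, div_one]
    gcongr
    exact hμs n h1 h2
end

section
/- Let d ≥ 2 and let c₄ > 10 be a real constant. There exists r₀ > 0 such that for every r ≥ r₀ and every line l ⊆ ℝ^d (i.e. l = {y + t·v : t ∈ ℝ} with |v| = 1) whose Euclidean distance to the origin is at most r + 1 (equivalently, whose cylinder Cyl(l) = l + B₁ intersects B_r), the set l ∩ (B_{c₄·r} \ B_{(c₄−1)·r}) has exactly two connected components, and each component has diameter at most 2r. -/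
open MeasureTheory Set
open scoped RealInnerProductSpace ENNReal NNReal

noncomputable section

/-! Parametrize the line as `t ↦ p + t • v` with `p ⟂ v`, so that `‖p + t • v‖² = ‖p‖² + t²`
and `‖p‖` is the distance of the line to the origin. The line then meets the annulus
`B_{ρ₂} \ B_{ρ₁}` exactly in the parameters `s < |t| ≤ T`, where `s = √(ρ₁² - ‖p‖²)` and
`T = √(ρ₂² - ‖p‖²)`: two intervals, separated by the hyperplane `v^⟂`, each of length
`T - s = (ρ₂² - ρ₁²) / (T + s)`. For `ρ₁ = (c₄ - 1) r`, `ρ₂ = c₄ r` and `‖p‖ ≤ 2r` we have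
`T ≈ c₄ r` and `s ≈ (c₄ - 1) r`, so this length is about `r`, below `2r`. -/

theorem connectedComponentIn_union_eq_of_separated {X : Type*} [TopologicalSpace X]
    {S₁ S₂ U V : Set X} (hU : IsOpen U) (hV : IsOpen V) (hUV : Disjoint U V)
    (h₁ : S₁ ⊆ U) (h₂ : S₂ ⊆ V) (hS₁ : IsPreconnected S₁) {z : X} (hz : z ∈ S₁) :
    connectedComponentIn (S₁ ∪ S₂) z = S₁ := by
  refine Subset.antisymm ?_ (hS₁.subset_connectedComponentIn hz subset_union_left)
  have hsub : connectedComponentIn (S₁ ∪ S₂) z ⊆ U :=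
    isPreconnected_connectedComponentIn.subset_left_of_subset_union hU hV hUV
      ((connectedComponentIn_subset _ _).trans (union_subset_union h₁ h₂))
      ⟨z, mem_connectedComponentIn (Or.inl hz), h₁ hz⟩
  intro w hw
  exact (connectedComponentIn_subset _ _ hw).resolve_right
    fun hw₂ => disjoint_left.mp hUV (hsub hw) (h₂ hw₂)

theorem setOf_abs_mem_Ioc {s T : ℝ} (hs : 0 ≤ s) :
    {t : ℝ | s < |t| ∧ |t| ≤ T} = Ioc s T ∪ Ico (-T) (-s) := by
  ext t
  simp only [mem_ofPred_eq, mem_union, mem_Ioc, mem_Ico]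
  rcases abs_cases t with ⟨ht, h0⟩ | ⟨ht, h0⟩ <;> rw [ht] <;> grind

theorem Real.sqrt_sq_sub_sqrt_sq_le_two_mul {a c r : ℝ} (hc : 4 ≤ c) (hr : 0 ≤ r) (ha₀ : 0 ≤ a)
    (ha : a ≤ 2 * r) :
    √((c * r) ^ 2 - a ^ 2) - √(((c - 1) * r) ^ 2 - a ^ 2) ≤ 2 * r := by
  have ha₂ : a ^ 2 ≤ (2 * r) ^ 2 := pow_le_pow_left₀ ha₀ ha 2
  set x := ((c - 1) * r) ^ 2 - a ^ 2
  have hx : 0 ≤ x := sub_nonneg.2 (pow_le_pow_left₀ ha₀ (by nlinarith) 2)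
  -- squaring `hsqrt` below, with `a² ≤ 4r²`, needs `(2c - 5)² + 16 · 4 ≤ 16 (c - 1)²`
  have hc' : 0 ≤ 12 * c ^ 2 - 12 * c - 73 := by nlinarith
  have hsqrt : (2 * c - 5) * r ≤ 4 * √x := by
    rw [← Real.sqrt_sq (by norm_num : (0 : ℝ) ≤ 4), ← Real.sqrt_mul (by norm_num)]
    exact Real.le_sqrt_of_sq_le (by nlinarith [mul_nonneg hc' (sq_nonneg r)])
  rw [sub_le_iff_le_add, Real.sqrt_le_left (by positivity)]
  nlinarith [Real.sq_sqrt hx]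

section Line

variable {E : Type*} [NormedAddCommGroup E] [InnerProductSpace ℝ E] {v p : E}

theorem isometry_add_smul (hv : ‖v‖ = 1) : Isometry fun t : ℝ => p + t • v :=
  Isometry.of_dist_eq fun t₁ t₂ => by
    rw [dist_add_left, dist_eq_norm, ← sub_smul, norm_smul, hv, mul_one, Real.dist_eq,
      Real.norm_eq_abs]

theorem inner_add_smul_of_inner_eq_zero (hv : ‖v‖ = 1) (hp : ⟪v, p⟫ = 0) (t : ℝ) :
    ⟪v, p + t • v⟫ = t := by
  rw [inner_add_right, hp, real_inner_smul_right, real_inner_self_eq_norm_sq, hv]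
  ring

theorem norm_add_smul_sq_of_inner_eq_zero (hv : ‖v‖ = 1) (hp : ⟪v, p⟫ = 0) (t : ℝ) :
    ‖p + t • v‖ ^ 2 = ‖p‖ ^ 2 + t ^ 2 := by
  have hpv : ⟪p, t • v⟫ = 0 := by rw [real_inner_smul_right, real_inner_comm, hp, mul_zero]
  rw [sq, norm_add_sq_eq_norm_sq_add_norm_sq_real hpv, norm_smul, hv, mul_one,
    Real.norm_eq_abs, ← sq, ← sq, sq_abs]

theorem norm_le_infDist_range_add_smul (hv : ‖v‖ = 1) (hp : ⟪v, p⟫ = 0) :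
    ‖p‖ ≤ Metric.infDist 0 (range fun t : ℝ => p + t • v) := by
  refine (Metric.le_infDist (range_nonempty _)).2 ?_
  rintro _ ⟨t, rfl⟩
  rw [dist_zero_left]
  refine (sq_le_sq₀ (norm_nonneg _) (norm_nonneg _)).1 ?_
  rw [norm_add_smul_sq_of_inner_eq_zero hv hp]
  exact le_add_of_nonneg_right (sq_nonneg t)

theorem add_smul_mem_annulus_iff (hv : ‖v‖ = 1) (hp : ⟪v, p⟫ = 0) {ρ₁ ρ₂ : ℝ}
    (hρ₁ : ‖p‖ ≤ ρ₁) (hρ : ρ₁ ≤ ρ₂) (t : ℝ) :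
    p + t • v ∈ Metric.closedBall 0 ρ₂ \ Metric.closedBall 0 ρ₁ ↔
      √(ρ₁ ^ 2 - ‖p‖ ^ 2) < |t| ∧ |t| ≤ √(ρ₂ ^ 2 - ‖p‖ ^ 2) := by
  have hp₁ : ‖p‖ ^ 2 ≤ ρ₁ ^ 2 := pow_le_pow_left₀ (norm_nonneg p) hρ₁ 2
  have h₁₂ : ρ₁ ^ 2 ≤ ρ₂ ^ 2 := pow_le_pow_left₀ ((norm_nonneg p).trans hρ₁) hρ 2
  rw [← Real.sqrt_sq_eq_abs, Real.sqrt_lt_sqrt_iff (by linarith),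
    Real.sqrt_le_sqrt_iff (by linarith), mem_sdiff, mem_closedBall_zero_iff,
    mem_closedBall_zero_iff, not_le,
    ← sq_lt_sq₀ ((norm_nonneg p).trans hρ₁) (norm_nonneg _),
    ← sq_le_sq₀ (norm_nonneg _) ((norm_nonneg p).trans (hρ₁.trans hρ)),
    norm_add_smul_sq_of_inner_eq_zero hv hp]
  constructor <;> rintro ⟨h, h'⟩ <;> constructor <;> linarith

theorem range_add_smul_inter_annulus (hv : ‖v‖ = 1) (hp : ⟪v, p⟫ = 0) {ρ₁ ρ₂ : ℝ}
    (hρ₁ : ‖p‖ ≤ ρ₁) (hρ : ρ₁ ≤ ρ₂) :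
    (range fun t : ℝ => p + t • v) ∩ (Metric.closedBall 0 ρ₂ \ Metric.closedBall 0 ρ₁) =
      (fun t : ℝ => p + t • v) '' Ioc √(ρ₁ ^ 2 - ‖p‖ ^ 2) √(ρ₂ ^ 2 - ‖p‖ ^ 2) ∪
        (fun t : ℝ => p + t • v) '' Ico (-√(ρ₂ ^ 2 - ‖p‖ ^ 2)) (-√(ρ₁ ^ 2 - ‖p‖ ^ 2)) := by
  rw [← image_union, ← setOf_abs_mem_Ioc (Real.sqrt_nonneg _), ← image_preimage_eq_range_inter]
  congr 1
  ext t
  exact add_smul_mem_annulus_iff hv hp hρ₁ hρ t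

theorem exists_two_components_range_add_smul_inter_annulus (hv : ‖v‖ = 1)
    (hp : ⟪v, p⟫ = 0) {ρ₁ ρ₂ : ℝ} (hρ₁ : ‖p‖ ≤ ρ₁) (hρ : ρ₁ < ρ₂) :
    ∃ S₁ S₂ : Set E,
      (range fun t : ℝ => p + t • v) ∩ (Metric.closedBall 0 ρ₂ \ Metric.closedBall 0 ρ₁) =
        S₁ ∪ S₂ ∧
      S₁ ≠ S₂ ∧ S₁.Nonempty ∧ S₂.Nonempty ∧
      (∀ z ∈ S₁, connectedComponentIn (S₁ ∪ S₂) z = S₁) ∧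
      (∀ z ∈ S₂, connectedComponentIn (S₁ ∪ S₂) z = S₂) ∧
      Metric.diam S₁ = √(ρ₂ ^ 2 - ‖p‖ ^ 2) - √(ρ₁ ^ 2 - ‖p‖ ^ 2) ∧
      Metric.diam S₂ = √(ρ₂ ^ 2 - ‖p‖ ^ 2) - √(ρ₁ ^ 2 - ‖p‖ ^ 2) := by
  set f : ℝ → E := fun t => p + t • v
  set s := √(ρ₁ ^ 2 - ‖p‖ ^ 2)
  set T := √(ρ₂ ^ 2 - ‖p‖ ^ 2)
  have hρ₁' : 0 ≤ ρ₁ := (norm_nonneg p).trans hρ₁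
  have hsT : s < T := Real.sqrt_lt_sqrt (sub_nonneg.2 (pow_le_pow_left₀ (norm_nonneg p) hρ₁ 2))
    (sub_lt_sub_right (pow_lt_pow_left₀ hρ hρ₁' two_ne_zero) _)
  have hf : Continuous f := by fun_prop
  have hU : IsOpen {z : E | 0 < ⟪v, z⟫} := isOpen_lt continuous_const (by fun_prop)
  have hV : IsOpen {z : E | ⟪v, z⟫ < 0} := isOpen_lt (by fun_prop) continuous_const
  have hUV : Disjoint {z : E | 0 < ⟪v, z⟫} {z | ⟪v, z⟫ < 0} :=
    disjoint_left.2 fun z (h₁ : 0 < ⟪v, z⟫) (h₂ : ⟪v, z⟫ < 0) => lt_asymm h₁ h₂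
  have h₁ : f '' Ioc s T ⊆ {z | 0 < ⟪v, z⟫} := by
    rintro _ ⟨t, ht, rfl⟩
    simp only [mem_ofPred_eq, f, inner_add_smul_of_inner_eq_zero hv hp]
    exact (Real.sqrt_nonneg _).trans_lt ht.1
  have h₂ : f '' Ico (-T) (-s) ⊆ {z | ⟪v, z⟫ < 0} := by
    rintro _ ⟨t, ht, rfl⟩
    simp only [mem_ofPred_eq, f, inner_add_smul_of_inner_eq_zero hv hp]
    linarith [ht.2, Real.sqrt_nonneg (ρ₁ ^ 2 - ‖p‖ ^ 2)]
  have hT₁ : f T ∈ f '' Ioc s T := mem_image_of_mem f ⟨hsT, le_rfl⟩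
  have hT₂ : f (-T) ∈ f '' Ico (-T) (-s) := mem_image_of_mem f ⟨le_rfl, neg_lt_neg hsT⟩
  refine ⟨_, _, range_add_smul_inter_annulus hv hp hρ₁ hρ.le,
    fun h => disjoint_left.1 hUV (h₁ hT₁) (h₂ (h ▸ hT₁)), ⟨_, hT₁⟩, ⟨_, hT₂⟩,
    fun z hz => connectedComponentIn_union_eq_of_separated hU hV hUV h₁ h₂
      (isPreconnected_Ioc.image _ hf.continuousOn) hz,
    fun z hz => ?_, ?_, ?_⟩
  · rw [union_comm]
    exact connectedComponentIn_union_eq_of_separated hV hU hUV.symm h₂ h₁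
      (isPreconnected_Ico.image _ hf.continuousOn) hz
  · rw [(isometry_add_smul hv).diam_image, Real.diam_Ioc hsT.le]
  · rw [(isometry_add_smul hv).diam_image, Real.diam_Ico (neg_le_neg hsT.le)]
    ring

end Line

theorem lineOf_eq_range {d : ℕ} (v y : Euc d) :
    lineOf (v, y) = range fun t : ℝ => (y - ⟪v, y⟫ • v) + t • v := by
  ext z
  simp only [lineOf, mem_ofPred_eq, mem_range]
  constructor
  · rintro ⟨t, rfl⟩
    exact ⟨t + ⟪v, y⟫, by module⟩
  · rintro ⟨t, rfl⟩
    exact ⟨t - ⟪v, y⟫, by module⟩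

theorem line_annulus_two_components_general (d : ℕ) (c₄ : ℝ) (hc₄ : 10 < c₄) :
    ∃ r₀ : ℝ, 0 < r₀ ∧ ∀ r : ℝ, r₀ ≤ r →
      ∀ v y : Euc d, ‖v‖ = 1 →
        Metric.infDist (0 : Euc d) (lineOf (v, y)) ≤ r + 1 →
          ∃ S₁ S₂ : Set (Euc d),
            (lineOf (v, y) ∩
                (Metric.closedBall 0 (c₄ * r) \ Metric.closedBall 0 ((c₄ - 1) * r)))
              = S₁ ∪ S₂ ∧
            S₁ ≠ S₂ ∧ S₁.Nonempty ∧ S₂.Nonempty ∧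
            (∀ z ∈ S₁,
              connectedComponentIn
                (lineOf (v, y) ∩
                  (Metric.closedBall 0 (c₄ * r) \ Metric.closedBall 0 ((c₄ - 1) * r))) z
                = S₁) ∧
            (∀ z ∈ S₂,
              connectedComponentIn
                (lineOf (v, y) ∩
                  (Metric.closedBall 0 (c₄ * r) \ Metric.closedBall 0 ((c₄ - 1) * r))) z
                = S₂) ∧
            Metric.diam S₁ ≤ 2 * r ∧ Metric.diam S₂ ≤ 2 * r := by
  refine ⟨1, one_pos, fun r hr v y hv hdist => ?_⟩
  set p := y - ⟪v, y⟫ • v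
  have hp : ⟪v, p⟫ = 0 := by
    rw [inner_sub_right, real_inner_smul_right, real_inner_self_eq_norm_sq, hv]
    ring
  rw [lineOf_eq_range] at hdist ⊢
  have hp₂ : ‖p‖ ≤ 2 * r := by linarith [norm_le_infDist_range_add_smul hv hp]
  obtain ⟨S₁, S₂, hS, hne, hS₁, hS₂, hc₁, hc₂, hd₁, hd₂⟩ :=
    exists_two_components_range_add_smul_inter_annulus hv hp
      (ρ₁ := (c₄ - 1) * r) (ρ₂ := c₄ * r) (by nlinarith) (by nlinarith)
  have hdiam := Real.sqrt_sq_sub_sqrt_sq_le_two_mul (c := c₄) (by linarith) (by linarith) (norm_nonneg p) hp₂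
  exact ⟨S₁, S₂, hS, hne, hS₁, hS₂, hS ▸ hc₁, hS ▸ hc₂, hd₁ ▸ hdiam, hd₂ ▸ hdiam⟩

/-- For `c₄ > 10` and all large `r`, any line within distance `r + 1` of the origin meets
the annulus `B_{c₄ r} \ B_{(c₄-1) r}` in exactly two connected components, each of diameter
at most `2r`. -/
theorem line_annulus_two_components (d : ℕ) (hd : 2 ≤ d) (c₄ : ℝ) (hc₄ : 10 < c₄) :
    ∃ r₀ : ℝ, 0 < r₀ ∧ ∀ r : ℝ, r₀ ≤ r →
      ∀ v y : Euc d, ‖v‖ = 1 →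
        Metric.infDist (0 : Euc d) (lineOf (v, y)) ≤ r + 1 →
          ∃ S₁ S₂ : Set (Euc d),
            (lineOf (v, y) ∩
                (Metric.closedBall 0 (c₄ * r) \ Metric.closedBall 0 ((c₄ - 1) * r)))
              = S₁ ∪ S₂ ∧
            S₁ ≠ S₂ ∧ S₁.Nonempty ∧ S₂.Nonempty ∧
            (∀ z ∈ S₁,
              connectedComponentIn
                (lineOf (v, y) ∩
                  (Metric.closedBall 0 (c₄ * r) \ Metric.closedBall 0 ((c₄ - 1) * r))) z
                = S₁) ∧
            (∀ z ∈ S₂,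
              connectedComponentIn
                (lineOf (v, y) ∩
                  (Metric.closedBall 0 (c₄ * r) \ Metric.closedBall 0 ((c₄ - 1) * r))) z
                = S₂) ∧
            Metric.diam S₁ ≤ 2 * r ∧ Metric.diam S₂ ≤ 2 * r :=
  line_annulus_two_components_general d c₄ hc₄
end
end
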